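/- arXiv:2104.04337 — 3 statements merged into one kernel-verified Lean document; each statement's English description precedes it below -/
import Mathlib

section
/- Let N = pn with p ≥ 2, and consider a uniformly random batch division of {1,…,N} into n batches of size p. For any fixed index i and any fixed configuration x₁,…,x_N ∈ ℝ^d (independent of the random division), the random-batch force error χ_i := (1/(p−1)) ∑_{j∈C(i), j≠i} K(x_i − x_j) − (1/(N−1)) ∑_{j≠i} K(x_i − x_j) has expectation zero: E[χ_i] = 0. -/
open Finset

/-- For a uniformly random division of `{1,…,N}` (with `N = p*n`, `p ≥ 2`)
into `n` batches of size `p`, the random-batch force error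
`χ_i = (1/(p−1)) ∑_{j ∈ C(i), j ≠ i} K(x_i − x_j) − (1/(N−1)) ∑_{j ≠ i} K(x_i − x_j)`
has expectation zero.  A batch division is encoded as a map `f : Fin (p*n) → Fin n`
all of whose fibers have cardinality `p`, and `C(i)` is the fiber containing `i`. -/
theorem rbm_force_error_unbiased
    (p n : ℕ) (hp : 2 ≤ p) (hn : 1 ≤ n)
    (d : ℕ) (hd : 1 ≤ d)
    (K : EuclideanSpace ℝ (Fin d) → EuclideanSpace ℝ (Fin d))
    (x : Fin (p * n) → EuclideanSpace ℝ (Fin d)) (i : Fin (p * n)) :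
    let D : Finset (Fin (p * n) → Fin n) :=
      Finset.univ.filter
        (fun f => ∀ b : Fin n, (Finset.univ.filter (fun j => f j = b)).card = p)
    let χ : (Fin (p * n) → Fin n) → EuclideanSpace ℝ (Fin d) := fun f =>
      ((p : ℝ) - 1)⁻¹ •
          ∑ j ∈ (Finset.univ.filter (fun j => f j = f i)).erase i, K (x i - x j)
        - (((p * n : ℕ) : ℝ) - 1)⁻¹ • ∑ j ∈ Finset.univ.erase i, K (x i - x j)
    (D.card : ℝ)⁻¹ • ∑ f ∈ D, χ f = 0 := by
  intro D χ
  have hN2 : 2 ≤ p * n := le_trans hp (Nat.le_mul_of_pos_right p hn)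
  -- membership in D is preserved by composing with a permutation
  have hcomp : ∀ (σ : Equiv.Perm (Fin (p * n))) (f : Fin (p * n) → Fin n),
      f ∈ D → (f ∘ σ) ∈ D := by
    intro σ f hf
    simp only [D, mem_filter, mem_univ, true_and] at hf ⊢
    intro b
    refine Eq.trans ?_ (hf b)
    apply card_bij' (fun j _ => σ j) (fun j _ => σ.symm j)
    · intro a ha
      simp only [mem_filter, mem_univ, true_and, Function.comp_apply] at ha ⊢
      exact ha
    · intro a ha
      simp only [mem_filter, mem_univ, true_and, Function.comp_apply] at ha ⊢
      simpa using ha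
    · intro a _; simp
    · intro a _; simp
  set c : Fin (p * n) → ℕ := fun j => (D.filter fun f => f j = f i).card with hcdef
  -- symmetry: c is constant on indices ≠ i
  have hcsym : ∀ j j' : Fin (p * n), j ≠ i → j' ≠ i → c j = c j' := by
    intro j j' hj hj'
    apply card_bij' (fun f _ => f ∘ Equiv.swap j j') (fun f _ => f ∘ Equiv.swap j j')
    · intro f hf
      simp only [mem_filter] at hf ⊢
      refine ⟨hcomp _ _ hf.1, ?_⟩
      have h1 : Equiv.swap j j' j' = j := Equiv.swap_apply_right j j'
      have h2 : Equiv.swap j j' i = i := Equiv.swap_apply_of_ne_of_ne hj.symm hj'.symm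
      simp only [Function.comp_apply, h1, h2]
      exact hf.2
    · intro f hf
      simp only [mem_filter] at hf ⊢
      refine ⟨hcomp _ _ hf.1, ?_⟩
      have h1 : Equiv.swap j j' j = j' := Equiv.swap_apply_left j j'
      have h2 : Equiv.swap j j' i = i := Equiv.swap_apply_of_ne_of_ne hj.symm hj'.symm
      simp only [Function.comp_apply, h1, h2]
      exact hf.2
    · intro f _; funext a; simp [Equiv.swap_apply_self]
    · intro f _; funext a; simp [Equiv.swap_apply_self]
  -- the erased filter set
  have hfe : ∀ f : Fin (p * n) → Fin n,
      (Finset.univ.filter (fun j => f j = f i)).erase i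
        = (Finset.univ.erase i).filter (fun j => f j = f i) := by
    intro f; ext a; simp [and_comm, and_left_comm]
  -- for f ∈ D, the fiber of i minus i has p - 1 elements
  have hfibcard : ∀ f ∈ D,
      ((Finset.univ.erase i).filter (fun j => f j = f i)).card = p - 1 := by
    intro f hf
    simp only [D, mem_filter, mem_univ, true_and] at hf
    rw [← hfe f, card_erase_of_mem (by simp), hf (f i)]
  -- double counting
  have hsum : ∑ j ∈ Finset.univ.erase i, c j = D.card * (p - 1) := by
    have : ∀ j, c j = ∑ f ∈ D, if f j = f i then 1 else 0 := by
      intro j; rw [hcdef]; exact Finset.card_filter _ _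
    calc ∑ j ∈ Finset.univ.erase i, c j
        = ∑ j ∈ Finset.univ.erase i, ∑ f ∈ D, if f j = f i then 1 else 0 := by
          exact Finset.sum_congr rfl fun j _ => this j
      _ = ∑ f ∈ D, ∑ j ∈ Finset.univ.erase i, if f j = f i then 1 else 0 :=
          Finset.sum_comm
      _ = ∑ f ∈ D, ((Finset.univ.erase i).filter (fun j => f j = f i)).card := by
          exact Finset.sum_congr rfl fun f _ => (Finset.card_filter _ _).symm
      _ = ∑ _f ∈ D, (p - 1) := Finset.sum_congr rfl hfibcard
      _ = D.card * (p - 1) := by rw [Finset.sum_const, smul_eq_mul]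
  have hNcard : (Finset.univ.erase i).card = p * n - 1 := by
    rw [card_erase_of_mem (mem_univ i), card_univ, Fintype.card_fin]
  -- hence the exact value of c j for j ≠ i
  have hc : ∀ j : Fin (p * n), j ≠ i → (p * n - 1) * c j = D.card * (p - 1) := by
    intro j hj
    have : ∑ j' ∈ Finset.univ.erase i, c j' = (p * n - 1) * c j := by
      rw [Finset.sum_congr rfl (fun j' hj' => hcsym j' j (Finset.ne_of_mem_erase hj') hj),
        Finset.sum_const, smul_eq_mul, hNcard]
    rw [← this, hsum]
  -- real versions
  have hp1 : ((p : ℝ) - 1) ≠ 0 := by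
    have : (2 : ℝ) ≤ (p : ℝ) := by exact_mod_cast hp
    linarith
  have hN1 : (((p * n : ℕ) : ℝ) - 1) ≠ 0 := by
    have : (2 : ℝ) ≤ ((p * n : ℕ) : ℝ) := by exact_mod_cast hN2
    linarith
  have hcR : ∀ j : Fin (p * n), j ≠ i →
      (c j : ℝ) = (D.card : ℝ) * ((p : ℝ) - 1) / (((p * n : ℕ) : ℝ) - 1) := by
    intro j hj
    have h := hc j hj
    have h' : ((p * n - 1 : ℕ) : ℝ) * (c j : ℝ) = (D.card : ℝ) * ((p - 1 : ℕ) : ℝ) := by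
      exact_mod_cast congrArg (Nat.cast : ℕ → ℝ) h
    rw [Nat.cast_sub (le_trans one_le_two hN2), Nat.cast_sub (le_trans one_le_two hp),
      Nat.cast_one] at h'
    rw [eq_div_iff hN1]
    push_cast at h' ⊢
    linarith [h']
  -- now compute the sum of χ
  have hχsum : ∑ f ∈ D, χ f = 0 := by
    have key : ∑ f ∈ D,
        ∑ j ∈ (Finset.univ.filter (fun j => f j = f i)).erase i, K (x i - x j)
        = ∑ j ∈ Finset.univ.erase i, (c j : ℝ) • K (x i - x j) := by
      calc ∑ f ∈ D, ∑ j ∈ (Finset.univ.filter (fun j => f j = f i)).erase i, K (x i - x j)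
          = ∑ f ∈ D, ∑ j ∈ Finset.univ.erase i,
              if f j = f i then K (x i - x j) else 0 := by
            refine Finset.sum_congr rfl fun f _ => ?_
            rw [hfe f, Finset.sum_filter]
        _ = ∑ j ∈ Finset.univ.erase i, ∑ f ∈ D,
              if f j = f i then K (x i - x j) else 0 := Finset.sum_comm
        _ = ∑ j ∈ Finset.univ.erase i, (c j : ℝ) • K (x i - x j) := by
            refine Finset.sum_congr rfl fun j _ => ?_
            rw [← Finset.sum_filter, Finset.sum_const, hcdef]
            exact (Nat.cast_smul_eq_nsmul ℝ _ _).symm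
    simp only [χ]
    rw [Finset.sum_sub_distrib, ← Finset.smul_sum, key, Finset.sum_const]
    have : ((p : ℝ) - 1)⁻¹ • ∑ j ∈ Finset.univ.erase i, (c j : ℝ) • K (x i - x j)
        = ∑ j ∈ Finset.univ.erase i,
            ((D.card : ℝ) / (((p * n : ℕ) : ℝ) - 1)) • K (x i - x j) := by
      rw [Finset.smul_sum]
      refine Finset.sum_congr rfl fun j hj => ?_
      rw [smul_smul, hcR j (Finset.ne_of_mem_erase hj)]
      congr 1
      field_simp
    rw [this, ← Finset.smul_sum]
    rw [← Nat.cast_smul_eq_nsmul ℝ D.card, smul_smul, ← div_eq_mul_inv, sub_self]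
  rw [hχsum, smul_zero]
end

section
/- Let N = pn with p ≥ 2 and N ≥ 3, and consider a uniformly random batch division of {1,…,N} into n batches of size p. For any fixed index i and fixed configuration x₁,…,x_N ∈ ℝ^d, the random-batch force error χ_i := (1/(p−1)) ∑_{j∈C(i), j≠i} K(x_i − x_j) − (1/(N−1)) ∑_{j≠i} K(x_i − x_j) satisfies E[|χ_i|²] = (1/(p−1) − 1/(N−1)) · Λ_i, where Λ_i := (1/(N−2)) ∑_{j≠i} | K(x_i − x_j) − (1/(N−1)) ∑_{ℓ≠i} K(x_i − x_ℓ) |². -/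
open Finset
open scoped RealInnerProductSpace

namespace RBMaux

variable {p n : ℕ}

/-- The set of batch divisions. -/
def Dset (p n : ℕ) : Finset (Fin (p * n) → Fin n) :=
  Finset.univ.filter
    (fun f => ∀ b : Fin n, (Finset.univ.filter (fun j => f j = b)).card = p)

lemma fiber_card_comp (σ : Equiv.Perm (Fin (p * n))) (f : Fin (p * n) → Fin n) (b : Fin n) :
    (univ.filter (fun j => f (σ j) = b)).card = (univ.filter (fun j => f j = b)).card := by
  apply Finset.card_bij (fun j _ => σ j)
  · intro j hj; simp only [mem_filter, mem_univ, true_and] at hj ⊢; exact hj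
  · intro j₁ _ j₂ _ h; exact σ.injective h
  · intro k hk
    refine ⟨σ.symm k, ?_, by simp⟩
    simp only [mem_filter, mem_univ, true_and] at hk ⊢
    simpa using hk

lemma mem_Dset_comp {f : Fin (p * n) → Fin n} (σ : Equiv.Perm (Fin (p * n)))
    (hf : f ∈ Dset p n) : f ∘ σ ∈ Dset p n := by
  simp only [Dset, mem_filter, mem_univ, true_and] at hf ⊢
  intro b
  have : (univ.filter (fun j => (f ∘ σ) j = b)).card
      = (univ.filter (fun j => f j = b)).card := fiber_card_comp σ f b
  rw [this]; exact hf b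

lemma count_comp (σ : Equiv.Perm (Fin (p * n))) (P : (Fin (p * n) → Fin n) → Prop)
    [DecidablePred P] :
    ((Dset p n).filter (fun f => P (f ∘ σ))).card = ((Dset p n).filter P).card := by
  apply Finset.card_bij (fun f _ => f ∘ σ)
  · intro f hf
    simp only [mem_filter] at hf ⊢
    exact ⟨mem_Dset_comp σ hf.1, hf.2⟩
  · intro f₁ _ f₂ _ h
    funext j
    have := congrFun h (σ.symm j)
    simpa using this
  · intro g hg
    simp only [mem_filter] at hg
    refine ⟨g ∘ σ.symm, ?_, ?_⟩
    · simp only [mem_filter]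
      refine ⟨mem_Dset_comp σ.symm hg.1, ?_⟩
      have : (g ∘ ⇑σ.symm) ∘ ⇑σ = g := by funext j; simp
      rw [this]; exact hg.2
    · funext j; simp

lemma Dset_nonempty : (Dset p n).Nonempty := by
  classical
  refine ⟨fun j => (finProdFinEquiv.symm j).2, ?_⟩
  simp only [Dset, mem_filter, mem_univ, true_and]
  intro b
  rw [← Fintype.card_subtype]
  have e2 : {x : Fin p × Fin n // x.2 = b} ≃ Fin p :=
    { toFun := fun x => x.1.1
      invFun := fun a => ⟨(a, b), rfl⟩
      left_inv := by rintro ⟨⟨a, c⟩, rfl⟩; rfl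
      right_inv := fun a => rfl }
  have e : {j : Fin (p * n) // (finProdFinEquiv.symm j).2 = b} ≃ Fin p :=
    ((finProdFinEquiv.symm).subtypeEquiv (fun j => Iff.rfl)).trans e2
  rw [Fintype.card_congr e, Fintype.card_fin]

end RBMaux

set_option maxHeartbeats 1000000 in
/-- For a uniformly random division of `{1,…,N}` (with `N = p*n ≥ 3`, `p ≥ 2`)
into `n` batches of size `p`, the random-batch force error `χ_i` satisfies
`E[|χ_i|²] = (1/(p−1) − 1/(N−1)) · Λ_i`, where
`Λ_i = (1/(N−2)) ∑_{j ≠ i} |K(x_i − x_j) − (1/(N−1)) ∑_{ℓ ≠ i} K(x_i − x_ℓ)|²`. -/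
theorem rbm_force_error_variance
    (p n : ℕ) (hp : 2 ≤ p) (hn : 1 ≤ n) (hN : 3 ≤ p * n)
    (d : ℕ) (hd : 1 ≤ d)
    (K : EuclideanSpace ℝ (Fin d) → EuclideanSpace ℝ (Fin d))
    (x : Fin (p * n) → EuclideanSpace ℝ (Fin d)) (i : Fin (p * n)) :
    let D : Finset (Fin (p * n) → Fin n) :=
      Finset.univ.filter
        (fun f => ∀ b : Fin n, (Finset.univ.filter (fun j => f j = b)).card = p)
    let χ : (Fin (p * n) → Fin n) → EuclideanSpace ℝ (Fin d) := fun f =>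
      ((p : ℝ) - 1)⁻¹ •
          ∑ j ∈ (Finset.univ.filter (fun j => f j = f i)).erase i, K (x i - x j)
        - (((p * n : ℕ) : ℝ) - 1)⁻¹ • ∑ j ∈ Finset.univ.erase i, K (x i - x j)
    let Λ : ℝ :=
      (((p * n : ℕ) : ℝ) - 2)⁻¹ *
        ∑ j ∈ Finset.univ.erase i,
          ‖K (x i - x j)
            - (((p * n : ℕ) : ℝ) - 1)⁻¹ • ∑ ℓ ∈ Finset.univ.erase i, K (x i - x ℓ)‖ ^ 2
    (D.card : ℝ)⁻¹ * ∑ f ∈ D, ‖χ f‖ ^ 2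
      = (((p : ℝ) - 1)⁻¹ - (((p * n : ℕ) : ℝ) - 1)⁻¹) * Λ := by
  classical
  intro D χ Λ
  have hDdef : D = RBMaux.Dset p n := rfl
  have hχdef : ∀ f : Fin (p * n) → Fin n, χ f =
      ((p : ℝ) - 1)⁻¹ •
          ∑ j ∈ (Finset.univ.filter (fun j => f j = f i)).erase i, K (x i - x j)
        - (((p * n : ℕ) : ℝ) - 1)⁻¹ • ∑ j ∈ Finset.univ.erase i, K (x i - x j) :=
    fun f => rfl
  have hΛdef : Λ = (((p * n : ℕ) : ℝ) - 2)⁻¹ *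
      ∑ j ∈ Finset.univ.erase i,
        ‖K (x i - x j)
          - (((p * n : ℕ) : ℝ) - 1)⁻¹ • ∑ ℓ ∈ Finset.univ.erase i, K (x i - x ℓ)‖ ^ 2 := rfl
  set nN : ℝ := ((p * n : ℕ) : ℝ) with hnN
  have hNR : (3 : ℝ) ≤ nN := by rw [hnN]; exact_mod_cast hN
  have hpR : (2 : ℝ) ≤ (p : ℝ) := by exact_mod_cast hp
  have hp1 : (p : ℝ) - 1 ≠ 0 := by linarith
  have hN1 : nN - 1 ≠ 0 := by linarith
  have hN2 : nN - 2 ≠ 0 := by linarith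
  set E : Finset (Fin (p * n)) := Finset.univ.erase i with hE
  have hEcard : E.card = p * n - 1 := by
    rw [hE, card_erase_of_mem (mem_univ i), card_univ, Fintype.card_fin]
  have hEcardR : (E.card : ℝ) = nN - 1 := by
    rw [hEcard, Nat.cast_sub (by omega), Nat.cast_one, hnN]
  set b : Fin (p * n) → EuclideanSpace ℝ (Fin d) := fun j =>
    K (x i - x j) - (nN - 1)⁻¹ • ∑ ℓ ∈ E, K (x i - x ℓ) with hb
  set ind : (Fin (p * n) → Fin n) → Fin (p * n) → ℝ :=
    fun f j => if f j = f i then 1 else 0 with hind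
  set W : Fin (p * n) → Fin (p * n) → ℕ := fun j k =>
    ((RBMaux.Dset p n).filter (fun f => f j = f i ∧ f k = f i)).card with hW
  set B : ℝ := ∑ j ∈ E, ‖b j‖ ^ 2 with hB
  -- Λ in terms of B
  have hΛB : Λ = (nN - 2)⁻¹ * B := hΛdef
  -- batch of i minus i has p - 1 elements
  have hfilE : ∀ f : Fin (p * n) → Fin n,
      E.filter (fun j => f j = f i) = (Finset.univ.filter (fun j => f j = f i)).erase i := by
    intro f
    rw [hE, Finset.filter_erase]
  have hSf : ∀ f ∈ RBMaux.Dset p n, (E.filter (fun j => f j = f i)).card = p - 1 := by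
    intro f hf
    simp only [RBMaux.Dset, mem_filter, mem_univ, true_and] at hf
    rw [hfilE f, card_erase_of_mem (by simp), hf (f i)]
  -- sum of b over E is zero
  have hsumb : ∑ j ∈ E, b j = 0 := by
    simp only [hb]
    rw [Finset.sum_sub_distrib, Finset.sum_const,
      ← Nat.cast_smul_eq_nsmul ℝ, hEcardR, smul_smul, mul_inv_cancel₀ hN1, one_smul, sub_self]
  -- χ as indicator sum of b
  have hchi : ∀ f ∈ RBMaux.Dset p n,
      χ f = ((p : ℝ) - 1)⁻¹ • ∑ j ∈ E, ind f j • b j := by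
    intro f hf
    have h1 : ∑ j ∈ E, ind f j • b j = ∑ j ∈ E.filter (fun j => f j = f i), b j := by
      rw [Finset.sum_filter]
      refine Finset.sum_congr rfl fun j _ => ?_
      by_cases h : f j = f i <;> simp [hind, h]
    have h2 : ∑ j ∈ E.filter (fun j => f j = f i), b j
        = (∑ j ∈ (Finset.univ.filter (fun j => f j = f i)).erase i, K (x i - x j))
          - ((p : ℝ) - 1) • ((nN - 1)⁻¹ • ∑ ℓ ∈ E, K (x i - x ℓ)) := by
      simp only [hb]
      rw [Finset.sum_sub_distrib, Finset.sum_const, hSf f hf,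
        ← Nat.cast_smul_eq_nsmul ℝ, Nat.cast_sub (by omega : 1 ≤ p), Nat.cast_one, hfilE f]
    rw [hχdef f, h1, h2, smul_sub, smul_smul, inv_mul_cancel₀ hp1, one_smul]
  -- norm squared as double sum
  have hnormf : ∀ f ∈ RBMaux.Dset p n,
      ‖χ f‖ ^ 2 = (((p : ℝ) - 1)⁻¹) ^ 2 *
        ∑ j ∈ E, ∑ k ∈ E, ind f j * ind f k * ⟪b j, b k⟫ := by
    intro f hf
    rw [hchi f hf, norm_smul, mul_pow, Real.norm_eq_abs, sq_abs]
    congr 1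
    rw [← real_inner_self_eq_norm_sq, sum_inner]
    refine Finset.sum_congr rfl fun j _ => ?_
    rw [inner_sum]
    refine Finset.sum_congr rfl fun k _ => ?_
    rw [real_inner_smul_left, real_inner_smul_right]; ring
  -- counting weights
  have hWsum : ∀ j k : Fin (p * n),
      ∑ f ∈ RBMaux.Dset p n, ind f j * ind f k = (W j k : ℝ) := by
    intro j k
    have h1 : ∀ f : Fin (p * n) → Fin n,
        ind f j * ind f k = if (f j = f i ∧ f k = f i) then (1 : ℝ) else 0 := by
      intro f
      by_cases h1 : f j = f i <;> by_cases h2 : f k = f i <;> simp [hind, h1, h2]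
    simp only [h1]
    rw [Finset.sum_boole, hW]
  -- total as weighted double sum
  have htotal1 : ∑ f ∈ RBMaux.Dset p n, ‖χ f‖ ^ 2 = (((p : ℝ) - 1)⁻¹) ^ 2 *
      ∑ j ∈ E, ∑ k ∈ E, (W j k : ℝ) * ⟪b j, b k⟫ := by
    rw [Finset.sum_congr rfl hnormf, ← Finset.mul_sum]
    congr 1
    rw [Finset.sum_comm]
    refine Finset.sum_congr rfl fun j _ => ?_
    rw [Finset.sum_comm]
    refine Finset.sum_congr rfl fun k _ => ?_
    rw [← Finset.sum_mul, hWsum j k]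
  -- symmetry: single counts
  have key1 : ∀ u v : Fin (p * n), u ≠ i → v ≠ i →
      ((RBMaux.Dset p n).filter (fun f => f u = f i)).card
        = ((RBMaux.Dset p n).filter (fun f => f v = f i)).card := by
    intro u v hu hv
    have h := RBMaux.count_comp (p := p) (n := n) (Equiv.swap u v) (fun f => f v = f i)
    rw [← h]
    apply congrArg
    apply Finset.filter_congr
    intro f _
    simp only [Function.comp_apply, Equiv.swap_apply_right,
      Equiv.swap_apply_of_ne_of_ne (Ne.symm hu) (Ne.symm hv)]
  -- symmetry: pair counts
  have key2 : ∀ u v u' v' : Fin (p * n), u ≠ i → v ≠ i → u ≠ v →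
      u' ≠ i → v' ≠ i → u' ≠ v' →
      ((RBMaux.Dset p n).filter (fun f => f u = f i ∧ f v = f i)).card
        = ((RBMaux.Dset p n).filter (fun f => f u' = f i ∧ f v' = f i)).card := by
    intro u v u' v' hu hv huv hu' hv' hu'v'
    set τ₁ : Equiv.Perm (Fin (p * n)) := Equiv.swap u' u with hτ₁
    have h1 : τ₁ u' = u := Equiv.swap_apply_left _ _
    have h2 : τ₁ i = i := Equiv.swap_apply_of_ne_of_ne (Ne.symm hu') (Ne.symm hu)
    have h3 : τ₁ v' ≠ u := by
      intro h; rw [← h1] at h; exact hu'v' (τ₁.injective h).symm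
    have h4 : τ₁ v' ≠ i := by
      intro h; rw [← h2] at h; exact hv' (τ₁.injective h)
    set τ₂ : Equiv.Perm (Fin (p * n)) := Equiv.swap (τ₁ v') v with hτ₂
    set σ : Equiv.Perm (Fin (p * n)) := τ₁.trans τ₂ with hσ
    have hσu : σ u' = u := by
      rw [hσ, Equiv.trans_apply, h1, hτ₂,
        Equiv.swap_apply_of_ne_of_ne (Ne.symm h3) huv]
    have hσv : σ v' = v := by
      rw [hσ, Equiv.trans_apply, hτ₂, Equiv.swap_apply_left]
    have hσi : σ i = i := by
      rw [hσ, Equiv.trans_apply, h2, hτ₂,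
        Equiv.swap_apply_of_ne_of_ne (Ne.symm h4) (Ne.symm hv)]
    have h := RBMaux.count_comp (p := p) (n := n) σ (fun f => f u' = f i ∧ f v' = f i)
    rw [← h]
    apply congrArg
    apply Finset.filter_congr
    intro f _
    simp only [Function.comp_apply, hσu, hσv, hσi]
  -- pick two distinct elements of E
  have hE2 : 1 < E.card := by omega
  obtain ⟨j₀, hj₀, k₀, hk₀, hj₀k₀⟩ := Finset.one_lt_card.mp hE2
  have hmemE : ∀ j, j ∈ E → j ≠ i := by
    intro j hj
    rw [hE] at hj
    exact (Finset.mem_erase.mp hj).1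
  have hj₀i : j₀ ≠ i := hmemE j₀ hj₀
  have hk₀i : k₀ ≠ i := hmemE k₀ hk₀
  -- diagonal constancy
  have hdiag : ∀ j ∈ E, (W j j : ℝ)
      = (((RBMaux.Dset p n).filter (fun f => f j₀ = f i)).card : ℝ) := by
    intro j hj
    have h1 : W j j = ((RBMaux.Dset p n).filter (fun f => f j = f i)).card := by
      simp only [hW]
      apply congrArg
      apply Finset.filter_congr
      intro f _
      simp
    rw [h1, key1 j j₀ (hmemE j hj) hj₀i]
  -- off-diagonal constancy
  have hoff : ∀ j ∈ E, ∀ k ∈ E, j ≠ k → W j k = W j₀ k₀ := by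
    intro j hj k hk hjk
    simp only [hW]
    exact key2 j k j₀ k₀ (hmemE j hj) (hmemE k hk) hjk hj₀i hk₀i hj₀k₀
  -- double-counting for singles
  have hc1 : (p * n - 1) * ((RBMaux.Dset p n).filter (fun f => f j₀ = f i)).card
      = (p - 1) * (RBMaux.Dset p n).card := by
    have step : ∑ j ∈ E, ((RBMaux.Dset p n).filter (fun f => f j = f i)).card
        = (p - 1) * (RBMaux.Dset p n).card := by
      simp only [Finset.card_filter]
      calc ∑ j ∈ E, ∑ f ∈ RBMaux.Dset p n, (if f j = f i then 1 else 0)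
          = ∑ f ∈ RBMaux.Dset p n, ∑ j ∈ E, (if f j = f i then 1 else 0) :=
            Finset.sum_comm
        _ = ∑ _f ∈ RBMaux.Dset p n, (p - 1) := Finset.sum_congr rfl fun f hf => by
              rw [← Finset.card_filter, hSf f hf]
        _ = (p - 1) * (RBMaux.Dset p n).card := by
              rw [Finset.sum_const, smul_eq_mul, mul_comm]
    calc (p * n - 1) * ((RBMaux.Dset p n).filter (fun f => f j₀ = f i)).card
        = ∑ _j ∈ E, ((RBMaux.Dset p n).filter (fun f => f j₀ = f i)).card := by
          rw [Finset.sum_const, smul_eq_mul, hEcard]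
      _ = ∑ j ∈ E, ((RBMaux.Dset p n).filter (fun f => f j = f i)).card :=
          Finset.sum_congr rfl fun j hj => (key1 j j₀ (hmemE j hj) hj₀i).symm
      _ = (p - 1) * (RBMaux.Dset p n).card := step
  -- double-counting for pairs
  have hc2 : (p * n - 1) * ((p * n - 2) * W j₀ k₀)
      = (p - 1) * ((p - 2) * (RBMaux.Dset p n).card) := by
    have step : ∑ j ∈ E, ∑ k ∈ E.erase j, W j k
        = (p - 1) * ((p - 2) * (RBMaux.Dset p n).card) := by
      simp only [hW, Finset.card_filter]
      calc ∑ j ∈ E, ∑ k ∈ E.erase j, ∑ f ∈ RBMaux.Dset p n,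
              (if f j = f i ∧ f k = f i then 1 else 0)
          = ∑ j ∈ E, ∑ f ∈ RBMaux.Dset p n, ∑ k ∈ E.erase j,
              (if f j = f i ∧ f k = f i then 1 else 0) :=
            Finset.sum_congr rfl fun j _ => Finset.sum_comm
        _ = ∑ f ∈ RBMaux.Dset p n, ∑ j ∈ E, ∑ k ∈ E.erase j,
              (if f j = f i ∧ f k = f i then 1 else 0) := Finset.sum_comm
        _ = ∑ f ∈ RBMaux.Dset p n, ((p - 1) * (p - 2)) := by
            refine Finset.sum_congr rfl fun f hf => ?_
            have hval : ∀ j ∈ E,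
                (∑ k ∈ E.erase j, if f j = f i ∧ f k = f i then 1 else 0)
                = if f j = f i then p - 2 else 0 := by
              intro j hj
              by_cases hA : f j = f i
              · simp only [hA, true_and, if_true]
                rw [← Finset.card_filter, Finset.filter_erase,
                  Finset.card_erase_of_mem (by simp [Finset.mem_filter, hj, hA]),
                  hSf f hf, Nat.sub_sub]
              · simp [hA]
            rw [Finset.sum_congr rfl hval, ← Finset.sum_filter, Finset.sum_const,
              smul_eq_mul, hSf f hf]
        _ = (p - 1) * ((p - 2) * (RBMaux.Dset p n).card) := by
            rw [Finset.sum_const, smul_eq_mul]; ring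
    calc (p * n - 1) * ((p * n - 2) * W j₀ k₀)
        = ∑ _j ∈ E, ((p * n - 2) * W j₀ k₀) := by
          rw [Finset.sum_const, smul_eq_mul, hEcard]
      _ = ∑ j ∈ E, ∑ _k ∈ E.erase j, W j₀ k₀ := by
          refine Finset.sum_congr rfl fun j hj => ?_
          rw [Finset.sum_const, smul_eq_mul, Finset.card_erase_of_mem hj, hEcard]
          congr 1
      _ = ∑ j ∈ E, ∑ k ∈ E.erase j, W j k := by
          refine Finset.sum_congr rfl fun j hj => Finset.sum_congr rfl fun k hk => ?_
          exact (hoff j hj k (Finset.mem_of_mem_erase hk)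
            (Ne.symm (Finset.mem_erase.mp hk).1)).symm
      _ = (p - 1) * ((p - 2) * (RBMaux.Dset p n).card) := step
  -- inner products sum to zero
  have hip0 : ∑ j ∈ E, ∑ k ∈ E, ⟪b j, b k⟫ = 0 := by
    have h1 : ∑ j ∈ E, ∑ k ∈ E, ⟪b j, b k⟫ = ⟪∑ j ∈ E, b j, ∑ k ∈ E, b k⟫ := by
      rw [sum_inner]
      exact Finset.sum_congr rfl fun j _ => (inner_sum _ _ _).symm
    rw [h1, hsumb, inner_zero_left]
  have hoffsum : ∑ j ∈ E, ∑ k ∈ E.erase j, ⟪b j, b k⟫ = -B := by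
    have h2 : ∀ j ∈ E, ∑ k ∈ E, ⟪b j, b k⟫
        = ‖b j‖ ^ 2 + ∑ k ∈ E.erase j, ⟪b j, b k⟫ := by
      intro j hj
      rw [← Finset.add_sum_erase _ _ hj, real_inner_self_eq_norm_sq]
    rw [Finset.sum_congr rfl h2, Finset.sum_add_distrib, ← hB] at hip0
    linarith [hip0]
  -- constants
  set c1 : ℝ := (((RBMaux.Dset p n).filter (fun f => f j₀ = f i)).card : ℝ) with hc1d
  set c2 : ℝ := ((W j₀ k₀ : ℕ) : ℝ) with hc2d
  have htotal2 : ∑ f ∈ RBMaux.Dset p n, ‖χ f‖ ^ 2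
      = (((p : ℝ) - 1)⁻¹) ^ 2 * ((c1 - c2) * B) := by
    rw [htotal1]
    congr 1
    have h3 : ∀ j ∈ E, ∑ k ∈ E, (W j k : ℝ) * ⟪b j, b k⟫
        = c1 * ‖b j‖ ^ 2 + c2 * ∑ k ∈ E.erase j, ⟪b j, b k⟫ := by
      intro j hj
      rw [← Finset.add_sum_erase _ (fun k => (W j k : ℝ) * ⟪b j, b k⟫) hj,
        real_inner_self_eq_norm_sq, hdiag j hj]
      congr 1
      rw [Finset.mul_sum]
      refine Finset.sum_congr rfl fun k hk => ?_
      rw [hoff j hj k (Finset.mem_of_mem_erase hk) (Ne.symm (Finset.mem_erase.mp hk).1),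
        ← hc2d]
    rw [Finset.sum_congr rfl h3, Finset.sum_add_distrib, ← Finset.mul_sum, ← Finset.mul_sum,
      hoffsum, ← hB]
    ring
  -- cast the counting identities to ℝ
  have e1 : ((p * n - 1 : ℕ) : ℝ) = nN - 1 := by
    rw [Nat.cast_sub (le_trans (by norm_num) hN), Nat.cast_one, hnN]
  have e2 : ((p * n - 2 : ℕ) : ℝ) = nN - 2 := by
    rw [Nat.cast_sub (le_trans (by norm_num) hN), hnN]; norm_num
  have e3 : ((p - 1 : ℕ) : ℝ) = (p : ℝ) - 1 := by
    rw [Nat.cast_sub (le_trans (by norm_num) hp), Nat.cast_one]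
  have e4 : ((p - 2 : ℕ) : ℝ) = (p : ℝ) - 2 := by
    rw [Nat.cast_sub hp]; norm_num
  set Dc : ℝ := ((RBMaux.Dset p n).card : ℝ) with hDcd
  have hDc0 : Dc ≠ 0 := by
    rw [hDcd]
    exact_mod_cast (Finset.card_pos.mpr RBMaux.Dset_nonempty).ne'
  have hc1R : (nN - 1) * c1 = ((p : ℝ) - 1) * Dc := by
    rw [hc1d, hDcd, ← e1, ← e3]
    exact_mod_cast hc1
  have hc2R : (nN - 1) * ((nN - 2) * c2) = ((p : ℝ) - 1) * (((p : ℝ) - 2) * Dc) := by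
    rw [hc2d, hDcd, ← e1, ← e2, ← e3, ← e4]
    exact_mod_cast hc2
  have hc1e : c1 = ((p : ℝ) - 1) * Dc / (nN - 1) := by
    rw [eq_div_iff hN1]; linear_combination hc1R
  have hc2e : c2 = ((p : ℝ) - 1) * (((p : ℝ) - 2) * Dc) / ((nN - 1) * (nN - 2)) := by
    rw [eq_div_iff (mul_ne_zero hN1 hN2)]; linear_combination hc2R
  rw [hDdef, htotal2, hΛB, ← hDcd, hc1e, hc2e]
  clear_value nN E b ind W B c1 c2 Dc
  field_simp
  ring
end

section
/- Let ρ(y) = (1/π)√(2−y²) for |y| ≤ √2 be the semicircle density. Then for every x with |x| < √2, the principal value Hilbert-transform integral satisfies p.v. ∫_{−√2}^{√2} ρ(y)/(x−y) dy = x; that is, lim_{ε→0⁺} ∫_{{y ∈ [−√2,√2] : |y−x| > ε}} (1/π)√(2−y²)/(x−y) dy = x. Consequently, with u(x,t) := p.v. ∫ ρ(y)/(x−y) dy, the drift u − x vanishes on the support of ρ, so the semicircle law is a stationary solution of the limiting Dyson equation ∂_t ρ + ∂_x(ρ(u−x)) = 0. -/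
open Real MeasureTheory intervalIntegral Set Filter

private lemma s2pos : (0:ℝ) < Real.sqrt 2 := Real.sqrt_pos.mpr (by norm_num)
private lemma s2sq : (Real.sqrt 2) ^ 2 = 2 := Real.sq_sqrt (by norm_num)

private lemma wcont : Continuous (fun y : ℝ => Real.sqrt (2 - y ^ 2)) :=
  Real.continuous_sqrt.comp (continuous_const.sub (continuous_pow 2))

private lemma K_eval (c : ℝ) (hc : 0 < c) :
    ∫ y in (-Real.sqrt 2)..(Real.sqrt 2), y / (Real.sqrt (2 - y ^ 2) + c) = 0 := by
  have h := intervalIntegral.integral_comp_neg (a := -(Real.sqrt 2)) (b := Real.sqrt 2)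
    (f := fun y => y / (Real.sqrt (2 - y ^ 2) + c))
  simp only [neg_neg] at h
  have h2 : ∀ z : ℝ, (-z) / (Real.sqrt (2 - (-z) ^ 2) + c) = -(z / (Real.sqrt (2 - z ^ 2) + c)) := by
    intro z; rw [neg_sq, neg_div]
  simp only [h2] at h
  rw [intervalIntegral.integral_neg] at h
  linarith

private lemma pole_eval (x a b : ℝ) (h : ∀ y ∈ Set.uIcc a b, x - y ≠ 0) :
    ∫ y in a..b, 1 / (x - y) = Real.log (x - a) - Real.log (x - b) := by
  have hd : ∀ y ∈ Set.uIcc a b, HasDerivAt (fun y => -Real.log (x - y)) (1 / (x - y)) y := by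
    intro y hy
    have h1 : HasDerivAt (fun y : ℝ => x - y) (-1) y := by
      simpa using (hasDerivAt_id y).const_sub x
    have h2 := ((Real.hasDerivAt_log (h y hy)).comp y h1).neg
    refine h2.congr_deriv ?_
    field_simp
  have hi : IntervalIntegrable (fun y => 1 / (x - y)) volume a b := by
    apply ContinuousOn.intervalIntegrable
    exact continuousOn_const.div ((continuous_const.sub continuous_id).continuousOn) h
  rw [intervalIntegral.integral_eq_sub_of_hasDerivAt hd hi]
  ring

private lemma w_deriv {y : ℝ} (hy : y ^ 2 < 2) :
    HasDerivAt (fun y : ℝ => Real.sqrt (2 - y ^ 2))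
      (-y / Real.sqrt (2 - y ^ 2)) y := by
  have h1 : HasDerivAt (fun y : ℝ => 2 - y ^ 2) (-(2 * y)) y := by
    simpa using (hasDerivAt_pow 2 y).const_sub 2
  have h2 := (Real.hasDerivAt_sqrt (by nlinarith : (2 : ℝ) - y ^ 2 ≠ 0)).comp y h1
  have hw : 0 < Real.sqrt (2 - y ^ 2) := Real.sqrt_pos.mpr (by nlinarith)
  refine h2.congr_deriv ?_
  field_simp

private lemma J_eval (m c : ℝ) (hm : 0 < m) (hms : m < Real.sqrt 2)
    (hc : 0 < c) (hc2 : c ^ 2 = 2 - m ^ 2) :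
    ∫ y in (-Real.sqrt 2)..(Real.sqrt 2), 1 / (Real.sqrt (2 - y ^ 2) + c)
      = π - (2 * c / m) *
        (Real.log (m + Real.sqrt 2 - c) - Real.log (m + c - Real.sqrt 2)) := by
  set s : ℝ := Real.sqrt 2 with hs
  have hs2 : s ^ 2 = 2 := s2sq
  have hspos : 0 < s := s2pos
  have hcs : c < s := by nlinarith
  have hmcs : s < m + c := by nlinarith
  set w : ℝ → ℝ := fun y => Real.sqrt (2 - y ^ 2) with hw
  set B : ℝ := s - c with hB
  have hBpos : 0 < B := by simp [hB]; linarith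
  set N : ℝ → ℝ := fun y => m * (s + w y) + B * y with hN
  set D : ℝ → ℝ := fun y => m * (s + w y) - B * y with hD
  have hwnn : ∀ y, 0 ≤ w y := fun y => Real.sqrt_nonneg _
  have hNpos : ∀ y ∈ Icc (-s) s, 0 < N y := by
    intro y hy
    have h1 : B * (-y) ≤ B * s := by
      apply mul_le_mul_of_nonneg_left _ hBpos.le; linarith [hy.1]
    have := hwnn y
    simp only [hN]; nlinarith
  have hDpos : ∀ y ∈ Icc (-s) s, 0 < D y := by
    intro y hy
    have h1 : B * y ≤ B * s := by
      apply mul_le_mul_of_nonneg_left _ hBpos.le; linarith [hy.2]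
    have := hwnn y
    simp only [hD]; nlinarith
  set G : ℝ → ℝ := fun y =>
    Real.arcsin (y / s) - (c / m) * (Real.log (N y) - Real.log (D y)) with hG
  have hNcont : Continuous N := by
    simp only [hN]
    exact (continuous_const.mul (continuous_const.add wcont)).add (continuous_const.mul continuous_id)
  have hDcont : Continuous D := by
    simp only [hD]
    exact (continuous_const.mul (continuous_const.add wcont)).sub (continuous_const.mul continuous_id)
  have hGcont : ContinuousOn G (Icc (-s) s) := by
    apply ContinuousOn.sub
    · exact (Real.continuous_arcsin.comp (continuous_id.div_const s)).continuousOn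
    · exact continuousOn_const.mul
        ((hNcont.continuousOn.log (fun y hy => (hNpos y hy).ne')).sub
         (hDcont.continuousOn.log (fun y hy => (hDpos y hy).ne')))
  have hderiv : ∀ y ∈ Ioo (-s) s, HasDerivAt G (1 / (w y + c)) y := by
    intro y hy
    have hy2 : y ^ 2 < 2 := by nlinarith [hy.1, hy.2]
    have hwpos : 0 < w y := Real.sqrt_pos.mpr (by nlinarith)
    have hww : (w y) ^ 2 = 2 - y ^ 2 := Real.sq_sqrt (by nlinarith)
    have hNy : 0 < N y := hNpos y ⟨hy.1.le, hy.2.le⟩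
    have hDy : 0 < D y := hDpos y ⟨hy.1.le, hy.2.le⟩
    have hwd : HasDerivAt w (-y / w y) y := w_deriv hy2
    -- arcsin part
    have harc : HasDerivAt (fun y : ℝ => Real.arcsin (y / s)) (1 / w y) y := by
      have h1 : y / s ≠ -1 := by
        intro h
        have : y = -s := by field_simp at h; linarith
        rw [this] at hy; exact absurd hy.1 (lt_irrefl _)
      have h2 : y / s ≠ 1 := by
        intro h
        have hys' : y = s := by field_simp at h; linarith
        rw [hys'] at hy; exact absurd hy.2 (lt_irrefl _)
      have h3 := (Real.hasDerivAt_arcsin h1 h2).comp y ((hasDerivAt_id y).div_const s)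
      refine h3.congr_deriv ?_
      have h4 : 1 - (y / s) ^ 2 = (2 - y ^ 2) / s ^ 2 := by field_simp; linarith [hs2]
      have h5 : Real.sqrt (1 - (y / s) ^ 2) = w y / s := by
        rw [h4, Real.sqrt_div (by nlinarith) _, Real.sqrt_sq hspos.le]
      rw [h5]
      field_simp
  -- derivative of N and D
    have hNd : HasDerivAt N (m * (-y / w y) + B) y := by
      exact ((hwd.const_add s).const_mul m).add (by simpa using (hasDerivAt_id y).const_mul B)
    have hDd : HasDerivAt D (m * (-y / w y) - B) y := by
      exact ((hwd.const_add s).const_mul m).sub (by simpa using (hasDerivAt_id y).const_mul B)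
    have hlogN : HasDerivAt (fun y => Real.log (N y)) ((N y)⁻¹ * (m * (-y / w y) + B)) y :=
      (Real.hasDerivAt_log hNy.ne').comp y hNd
    have hlogD : HasDerivAt (fun y => Real.log (D y)) ((D y)⁻¹ * (m * (-y / w y) - B)) y :=
      (Real.hasDerivAt_log hDy.ne').comp y hDd
    have hGd : HasDerivAt G
        (1 / w y - (c / m) * ((N y)⁻¹ * (m * (-y / w y) + B) - (D y)⁻¹ * (m * (-y / w y) - B)))
        y := harc.sub ((hlogN.sub hlogD).const_mul (c / m))
    convert hGd using 1
    -- the algebraic identity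
    have hys : y ^ 2 + (w y) ^ 2 = s ^ 2 := by rw [hww, hs2]; ring
    have hm2 : m ^ 2 = s ^ 2 - c ^ 2 := by rw [hs2]; linarith
    have hND : N y * D y = 2 * s * B * (w y + s) * (w y + c) := by
      have hy2' : y ^ 2 = s ^ 2 - (w y) ^ 2 := by linarith
      simp only [hN, hD, hB]
      linear_combination (s + w y) ^ 2 * hm2 - (s - c) ^ 2 * hy2'
    have hnum : (m * (-y / w y) + B) * D y - N y * (m * (-y / w y) - B)
        = 2 * m * B * s * (s + w y) / w y := by
      rw [eq_div_iff hwpos.ne']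
      have e1 : m * (-y / w y) + B = (B * w y - m * y) / w y := by field_simp; ring
      have e2 : m * (-y / w y) - B = (-(B * w y) - m * y) / w y := by field_simp; ring
      rw [e1, e2]
      simp only [hN, hD]
      field_simp
      linear_combination (2 * m * (s - c)) * hys
    have key : (N y)⁻¹ * (m * (-y / w y) + B) - (D y)⁻¹ * (m * (-y / w y) - B)
        = m / (w y * (w y + c)) := by
      rw [inv_mul_eq_div, inv_mul_eq_div, div_sub_div _ _ hNy.ne' hDy.ne', hnum, hND]
      rw [div_div]
      rw [div_eq_div_iff (by positivity) (by positivity)]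
      ring
    rw [key]
    field_simp
    ring
  -- FTC
  have hint : IntervalIntegrable (fun y => 1 / (w y + c)) volume (-s) s := by
    apply Continuous.intervalIntegrable
    exact continuous_const.div (wcont.add continuous_const)
      (fun y => by have := hwnn y; positivity)
  have hFTC := integral_eq_sub_of_hasDeriv_right_of_le (by linarith : -s ≤ s) hGcont
    (fun y hy => (hderiv y hy).hasDerivWithinAt) hint
  rw [hFTC]
  -- endpoint values
  have hws : w s = 0 := by simp only [hw]; rw [show (2:ℝ) - s ^ 2 = 0 by rw [hs2]; ring]; simp
  have hwns : w (-s) = 0 := by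
    simp only [hw]; rw [show (2:ℝ) - (-s) ^ 2 = 0 by rw [neg_pow]; simp; linarith [hs2]]; simp
  have hNs : N s = s * (m + s - c) := by simp only [hN, hws, hB]; ring
  have hDs : D s = s * (m + c - s) := by simp only [hD, hws, hB]; ring
  have hNns : N (-s) = s * (m + c - s) := by simp only [hN, hwns, hB]; ring
  have hDns : D (-s) = s * (m + s - c) := by simp only [hD, hwns, hB]; ring
  have hp1 : (0:ℝ) < m + s - c := by linarith
  have hp2 : (0:ℝ) < m + c - s := by linarith
  simp only [hG, hNs, hDs, hNns, hDns]
  rw [div_self hspos.ne', Real.arcsin_one]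
  rw [show -s / s = -1 by field_simp, Real.arcsin_neg_one]
  rw [Real.log_mul hspos.ne' hp1.ne', Real.log_mul hspos.ne' hp2.ne']
  ring


open scoped Real

set_option maxHeartbeats 1000000 in
/-- For the semicircle density `ρ(y) = (1/π)√(2−y²)` on `[−√2, √2]` and any
`x` with `|x| < √2`, the principal value Hilbert-transform integral satisfies
`p.v. ∫_{−√2}^{√2} ρ(y)/(x−y) dy = x`, i.e.
`lim_{ε→0⁺} ∫_{{y ∈ [−√2,√2] : |y−x| > ε}} (1/π)√(2−y²)/(x−y) dy = x`.
Hence the drift `u − x` vanishes on the support of `ρ` and the semicircle law is a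
stationary solution of the limiting Dyson equation. -/
theorem semicircle_hilbert_transform (x : ℝ) (hx : |x| < Real.sqrt 2) :
    Filter.Tendsto
      (fun ε : ℝ =>
        ∫ y in {y : ℝ | y ∈ Set.Icc (-Real.sqrt 2) (Real.sqrt 2) ∧ ε < |y - x|},
          (1 / π) * Real.sqrt (2 - y ^ 2) / (x - y))
      (nhdsWithin 0 (Set.Ioi 0)) (nhds x) := by
  obtain ⟨hx1, hx2⟩ := abs_lt.mp hx
  set s : ℝ := Real.sqrt 2 with hsdef
  have hs2 : s ^ 2 = 2 := s2sq
  have hspos : 0 < s := s2pos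
  have hx2two : x ^ 2 < 2 := by nlinarith
  set c : ℝ := Real.sqrt (2 - x ^ 2) with hcdef
  have hc : 0 < c := Real.sqrt_pos.mpr (by nlinarith)
  have hc2 : c ^ 2 = 2 - x ^ 2 := Real.sq_sqrt (by nlinarith)
  set w : ℝ → ℝ := fun y => Real.sqrt (2 - y ^ 2) with hwdef
  have hwnn : ∀ y, 0 ≤ w y := fun y => Real.sqrt_nonneg _
  set h : ℝ → ℝ := fun y => (x + y) / (w y + c) with hhdef
  have hhcont : Continuous h := by
    apply (continuous_const.add continuous_id).div (wcont.add continuous_const)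
    intro y; have := hwnn y; exact (add_pos_of_nonneg_of_pos this hc).ne'
  have hhint : ∀ a b : ℝ, IntervalIntegrable h volume a b := fun a b =>
    hhcont.intervalIntegrable a b
  set δ : ℝ := min (s - x) (x + s) with hδdef
  have hδpos : 0 < δ := by
    apply lt_min <;> linarith
  set f : ℝ → ℝ := fun y => (1 / π) * Real.sqrt (2 - y ^ 2) / (x - y) with hfdef
  set H : ℝ := ∫ y in (-s)..s, h y with hHdef
  set Lx : ℝ := Real.log (x + s) - Real.log (s - x) with hLxdef
  -- pointwise decomposition
  have hdecomp : ∀ y : ℝ, y ∈ Icc (-s) s → x - y ≠ 0 →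
      f y = (1 / π) * (h y + c * (1 / (x - y))) := by
    intro y hy hxy
    have hw2 : (w y) ^ 2 = 2 - y ^ 2 := Real.sq_sqrt (by nlinarith [hy.1, hy.2, hs2])
    have hwc : 0 < w y + c := by have := hwnn y; linarith
    have hπ := Real.pi_pos
    simp only [hfdef, hhdef]
    field_simp
    linear_combination hw2 - hc2
  -- formula for the truncated integral
  have key : ∀ ε ∈ Ioo (0:ℝ) δ,
      (∫ y in {y : ℝ | y ∈ Icc (-s) s ∧ ε < |y - x|}, f y)
        = (1 / π) * ((H - ∫ y in (x - ε)..(x + ε), h y) + c * Lx) := by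
    intro ε hε
    obtain ⟨hε0, hεδ⟩ := hε
    have hεs1 : -s < x - ε := by
      have := min_le_right (s - x) (x + s); simp only [hδdef] at hεδ; linarith [min_le_right (s - x) (x + s)]
    have hεs2 : x + ε < s := by
      linarith [min_le_left (s - x) (x + s)]
    -- the set splits
    have hsplit : {y : ℝ | y ∈ Icc (-s) s ∧ ε < |y - x|}
        = Ico (-s) (x - ε) ∪ Ioc (x + ε) s := by
      ext y
      simp only [mem_setOf_eq, mem_Icc, mem_union, mem_Ico, mem_Ioc, lt_abs]
      constructor
      · rintro ⟨⟨h1, h2⟩, h3 | h3⟩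
        · right; constructor <;> linarith
        · left; constructor <;> linarith
      · rintro (⟨h1, h2⟩ | ⟨h1, h2⟩)
        · exact ⟨⟨h1, by linarith⟩, Or.inr (by linarith)⟩
        · exact ⟨⟨by linarith, h2⟩, Or.inl (by linarith)⟩
    -- integrability on pieces
    have hfc1 : ContinuousOn f (Icc (-s) (x - ε)) := by
      apply ContinuousOn.div
      · exact (continuous_const.mul wcont).continuousOn
      · exact (continuous_const.sub continuous_id).continuousOn
      · intro y hy; simp only [mem_Icc] at hy; intro hh; linarith [hy.2, sub_eq_zero.mp hh]
    have hfc2 : ContinuousOn f (Icc (x + ε) s) := by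
      apply ContinuousOn.div
      · exact (continuous_const.mul wcont).continuousOn
      · exact (continuous_const.sub continuous_id).continuousOn
      · intro y hy; simp only [mem_Icc] at hy; intro hh; linarith [hy.1, sub_eq_zero.mp hh]
    have hint1 : IntegrableOn f (Ico (-s) (x - ε)) volume :=
      (hfc1.integrableOn_Icc).mono_set Ico_subset_Icc_self
    have hint2 : IntegrableOn f (Ioc (x + ε) s) volume :=
      (hfc2.integrableOn_Icc).mono_set Ioc_subset_Icc_self
    have hdisj : Disjoint (Ico (-s) (x - ε)) (Ioc (x + ε) s) := by
      rw [Set.disjoint_left]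
      intro y hy1 hy2
      simp only [mem_Ico] at hy1; simp only [mem_Ioc] at hy2
      linarith [hy1.2, hy2.1]
    rw [hsplit, setIntegral_union hdisj measurableSet_Ioc hint1 hint2]
    -- convert to interval integrals
    have e1 : ∫ y in Ico (-s) (x - ε), f y = ∫ y in (-s)..(x - ε), f y := by
      rw [intervalIntegral.integral_of_le (by linarith)]
      exact setIntegral_congr_set Ico_ae_eq_Ioc
    have e2 : ∫ y in Ioc (x + ε) s, f y = ∫ y in (x + ε)..s, f y := by
      rw [intervalIntegral.integral_of_le (by linarith)]
    rw [e1, e2]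
    -- split each interval integral
    have hpolec1 : ∀ y ∈ Set.uIcc (-s) (x - ε), x - y ≠ 0 := by
      intro y hy
      rw [Set.uIcc_of_le (by linarith)] at hy
      intro hh; linarith [hy.2, sub_eq_zero.mp hh]
    have hpolec2 : ∀ y ∈ Set.uIcc (x + ε) s, x - y ≠ 0 := by
      intro y hy
      rw [Set.uIcc_of_le (by linarith)] at hy
      intro hh; linarith [hy.1, sub_eq_zero.mp hh]
    have hpint1 : IntervalIntegrable (fun y => 1 / (x - y)) volume (-s) (x - ε) :=
      ContinuousOn.intervalIntegrable (continuousOn_const.div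
        ((continuous_const.sub continuous_id).continuousOn) hpolec1)
    have hpint2 : IntervalIntegrable (fun y => 1 / (x - y)) volume (x + ε) s :=
      ContinuousOn.intervalIntegrable (continuousOn_const.div
        ((continuous_const.sub continuous_id).continuousOn) hpolec2)
    have split1 : ∫ y in (-s)..(x - ε), f y
        = (1 / π) * ((∫ y in (-s)..(x - ε), h y) + c * ∫ y in (-s)..(x - ε), 1 / (x - y)) := by
      rw [show (∫ y in (-s)..(x - ε), f y)
          = ∫ y in (-s)..(x - ε), (1 / π) * (h y + c * (1 / (x - y))) from
        intervalIntegral.integral_congr (fun y hy => by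
          refine hdecomp y ?_ (hpolec1 y hy)
          rw [Set.uIcc_of_le (by linarith)] at hy
          exact ⟨hy.1, by linarith [hy.2]⟩)]
      rw [intervalIntegral.integral_const_mul,
        intervalIntegral.integral_add (hhint _ _) (hpint1.const_mul c),
        intervalIntegral.integral_const_mul]
    have split2 : ∫ y in (x + ε)..s, f y
        = (1 / π) * ((∫ y in (x + ε)..s, h y) + c * ∫ y in (x + ε)..s, 1 / (x - y)) := by
      rw [show (∫ y in (x + ε)..s, f y)
          = ∫ y in (x + ε)..s, (1 / π) * (h y + c * (1 / (x - y))) from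
        intervalIntegral.integral_congr (fun y hy => by
          refine hdecomp y ?_ (hpolec2 y hy)
          rw [Set.uIcc_of_le (by linarith)] at hy
          exact ⟨by linarith [hy.1], hy.2⟩)]
      rw [intervalIntegral.integral_const_mul,
        intervalIntegral.integral_add (hhint _ _) (hpint2.const_mul c),
        intervalIntegral.integral_const_mul]
    rw [split1, split2]
    -- evaluate pole integrals
    have p1 : ∫ y in (-s)..(x - ε), 1 / (x - y) = Real.log (x + s) - Real.log ε := by
      rw [pole_eval x _ _ hpolec1]
      congr 2 <;> ring
    have p2 : ∫ y in (x + ε)..s, 1 / (x - y) = Real.log ε - Real.log (s - x) := by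
      rw [pole_eval x _ _ hpolec2]
      rw [show x - (x + ε) = -ε by ring, show x - s = -(s - x) by ring,
        Real.log_neg_eq_log, Real.log_neg_eq_log]
    rw [p1, p2]
    -- combine the h-integrals
    have a1 : (∫ y in (-s)..(x - ε), h y) + (∫ y in (x - ε)..(x + ε), h y)
        = ∫ y in (-s)..(x + ε), h y :=
      intervalIntegral.integral_add_adjacent_intervals (hhint _ _) (hhint _ _)
    have a2 : (∫ y in (-s)..(x + ε), h y) + (∫ y in (x + ε)..s, h y)
        = ∫ y in (-s)..s, h y :=
      intervalIntegral.integral_add_adjacent_intervals (hhint _ _) (hhint _ _)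
    have hI : (∫ y in (-s)..(x - ε), h y) + (∫ y in (x + ε)..s, h y)
        = H - ∫ y in (x - ε)..(x + ε), h y := by
      rw [hHdef, ← a2, ← a1]; ring
    simp only [hLxdef]
    linear_combination (1 / π) * hI
  -- the correction term tends to zero
  have hcorr : Tendsto (fun ε => ∫ y in (x - ε)..(x + ε), h y) (nhdsWithin 0 (Ioi 0)) (nhds 0) := by
    apply squeeze_zero_norm' (a := fun ε => 2 * s / c * (2 * ε))
    · filter_upwards [Ioo_mem_nhdsGT_of_mem (by constructor <;> simp [hδpos.le, hδpos] :
        (0:ℝ) ∈ Ico 0 δ)] with ε hε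
      obtain ⟨hε0, hεδ⟩ := hε
      have hεs1 : -s < x - ε := by linarith [min_le_right (s - x) (x + s)]
      have hεs2 : x + ε < s := by linarith [min_le_left (s - x) (x + s)]
      have hb : ∀ y ∈ Set.uIoc (x - ε) (x + ε), ‖h y‖ ≤ 2 * s / c := by
        intro y hy
        rw [Set.uIoc_of_le (by linarith)] at hy
        have hy1 : -s ≤ y := by linarith [hy.1]
        have hy2 : y ≤ s := by linarith [hy.2]
        have hwy := hwnn y
        rw [hhdef]
        simp only [norm_div, Real.norm_eq_abs]
        rw [abs_of_pos (by linarith : (0:ℝ) < w y + c)]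
        apply div_le_div₀ (by positivity) _ hc (by linarith)
        calc |x + y| ≤ |x| + |y| := abs_add_le _ _
          _ ≤ 2 * s := by
            have : |x| ≤ s := le_of_lt hx
            have : |y| ≤ s := abs_le.mpr ⟨hy1, hy2⟩
            linarith [le_of_lt hx]
      calc ‖∫ y in (x - ε)..(x + ε), h y‖ ≤ 2 * s / c * |x + ε - (x - ε)| :=
            intervalIntegral.norm_integral_le_of_norm_le_const hb
        _ = 2 * s / c * (2 * ε) := by rw [show x + ε - (x - ε) = 2 * ε by ring,
              abs_of_pos (by linarith)]
    · have : Tendsto (fun ε : ℝ => 2 * s / c * (2 * ε)) (nhds 0) (nhds (2 * s / c * (2 * 0))) := by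
        exact (tendsto_const_nhds.mul (tendsto_const_nhds.mul tendsto_id))
      simpa using this.mono_left nhdsWithin_le_nhds
  -- assemble the limit
  have hlim : Tendsto (fun ε => (1 / π) * ((H - ∫ y in (x - ε)..(x + ε), h y) + c * Lx))
      (nhdsWithin 0 (Ioi 0)) (nhds ((1 / π) * ((H - 0) + c * Lx))) :=
    (((tendsto_const_nhds.sub hcorr).add tendsto_const_nhds).const_mul _)
  have heq : (fun ε : ℝ => ∫ y in {y : ℝ | y ∈ Icc (-s) s ∧ ε < |y - x|}, f y)
      =ᶠ[nhdsWithin 0 (Ioi 0)]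
      (fun ε => (1 / π) * ((H - ∫ y in (x - ε)..(x + ε), h y) + c * Lx)) := by
    filter_upwards [Ioo_mem_nhdsGT_of_mem (by constructor <;> simp [hδpos.le, hδpos] :
      (0:ℝ) ∈ Ico 0 δ)] with ε hε
    exact key ε hε
  have final : (1 / π) * ((H - 0) + c * Lx) = x := by
    -- split H
    have hJint : IntervalIntegrable (fun y => 1 / (w y + c)) volume (-s) s := by
      apply Continuous.intervalIntegrable
      apply continuous_const.div (wcont.add continuous_const)
      intro y; have := hwnn y; exact (add_pos_of_nonneg_of_pos this hc).ne'
    have hKint : IntervalIntegrable (fun y => y / (w y + c)) volume (-s) s := by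
      apply Continuous.intervalIntegrable
      apply continuous_id.div (wcont.add continuous_const)
      intro y; have := hwnn y; exact (add_pos_of_nonneg_of_pos this hc).ne'
    have hHsplit : H = x * (∫ y in (-s)..s, 1 / (w y + c)) := by
      have e : ∀ y ∈ Set.uIcc (-s) s, h y = x * (1 / (w y + c)) + y / (w y + c) := by
        intro y _
        have hwc : 0 < w y + c := by have := hwnn y; linarith
        rw [hhdef, mul_one_div, ← add_div]
      rw [hHdef, intervalIntegral.integral_congr e,
        intervalIntegral.integral_add ((hJint.const_mul x)) hKint,
        intervalIntegral.integral_const_mul, K_eval c hc, add_zero]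
    rcases eq_or_ne x 0 with hx0 | hx0
    · subst hx0
      simp only [hLxdef, zero_add, zero_sub, sub_zero]
      rw [hHsplit]
      simp [Real.log_neg_eq_log]
    · -- use the J evaluation with m = |x|
      set m : ℝ := |x| with hmdef
      have hm : 0 < m := abs_pos.mpr hx0
      have hm2 : m ^ 2 = x ^ 2 := sq_abs x
      have hms : m < s := hx
      have hc2m : c ^ 2 = 2 - m ^ 2 := by rw [hm2]; exact hc2
      have hJ := J_eval m c hm hms hc hc2m
      have hcs : c < s := by nlinarith
      have hmcs : s < m + c := by nlinarith
      rw [hHsplit, hJ]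
      -- the log identity: 2 * Lm = log (s + m) - log (s - m)
      have h1 : (m + s - c) ^ 2 = 2 * (s + m) * (s - c) := by
        linear_combination hc2m - hs2
      have h2 : (m + c - s) ^ 2 = 2 * (s - m) * (s - c) := by
        linear_combination hc2m - hs2
      have hp1 : (0:ℝ) < m + s - c := by linarith
      have hp2 : (0:ℝ) < m + c - s := by linarith
      have hsm1 : (0:ℝ) < s + m := by linarith
      have hsm2 : (0:ℝ) < s - m := by linarith
      have hsc : (0:ℝ) < s - c := by linarith
      have hl1 : 2 * Real.log (m + s - c) = Real.log 2 + Real.log (s + m) + Real.log (s - c) := by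
        have := congrArg Real.log h1
        rw [Real.log_pow, Real.log_mul (by positivity) hsc.ne',
          Real.log_mul (by norm_num) hsm1.ne'] at this
        push_cast at this
        linarith
      have hl2 : 2 * Real.log (m + c - s) = Real.log 2 + Real.log (s - m) + Real.log (s - c) := by
        have := congrArg Real.log h2
        rw [Real.log_pow, Real.log_mul (by positivity) hsc.ne',
          Real.log_mul (by norm_num) hsm2.ne'] at this
        push_cast at this
        linarith
      -- goal : (1/π) * (x * (π - (2c/m) * Lm) - 0 + c * Lx) = x
      have hkey : m * Lx = x * (Real.log (s + m) - Real.log (s - m)) := by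
        rcases hx0.lt_or_gt with hneg | hpos
        · rw [hLxdef, hmdef, abs_of_neg hneg, show s + -x = s - x by ring,
            show s - -x = x + s by ring]
          ring
        · rw [hLxdef, hmdef, abs_of_pos hpos, show s + x = x + s by ring]
      have hLm : 2 * (Real.log (m + s - c) - Real.log (m + c - s))
          = Real.log (s + m) - Real.log (s - m) := by linarith
      have hcLx : c * Lx = 2 * c * x * (Real.log (m + s - c) - Real.log (m + c - s)) / m := by
        rw [eq_div_iff hm.ne']
        linear_combination c * hkey - c * x * hLm
      have hπ : (0:ℝ) < π := Real.pi_pos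
      rw [hcLx]
      field_simp
      ring
  have hfin := Filter.Tendsto.congr' heq.symm hlim
  rwa [final] at hfin
end
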